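/- arXiv:2509.08926 — 2 statements merged into one kernel-verified Lean document; each statement's English description precedes it below -/
import Mathlib

section
/- With the setup as before and tₙ = 1 − a₁ − n for n a nonnegative integer, the residue Rₙ = lim_{t→tₙ⁺}(t−tₙ)·m(t) equals π·Γ(a₁+b₁)/Γ(a₁) · (1/Γ(b₁−n)) · (−1)ⁿ/n!, provided a₁ − a₂ is not an integer, b₁ is not a positive integer, and the second mixture component's Mellin transform is finite at tₙ. -/
/-!
Near `tₙ = 1 - a₁ - n` the numerator `Γ(t + a₁ - 1)` of the first component runs through the
simple pole of `Γ` at `-n`, whose residue `(-1)ⁿ / n!` follows from `Γ(s + 1) = s Γ(s)` by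
induction on `n`. Its denominator only enters through `1 / Γ`, which is entire, so it tends to
`1 / Γ(b₁ - n)`. The second component is continuous at `tₙ`, so multiplied by `t - tₙ` it vanishes
in the limit.
-/

open Filter Topology
open scoped Nat

namespace Real

theorem continuous_inv_Gamma : Continuous fun s : ℝ => (Gamma s)⁻¹ := by
  have hre : (fun s : ℝ => (Gamma s)⁻¹) = fun s : ℝ => ((Complex.Gamma s)⁻¹).re := by
    funext s
    rw [Complex.Gamma_ofReal, ← Complex.ofReal_inv, Complex.ofReal_re]
  rw [hre]
  exact Complex.continuous_re.comp
    (Complex.differentiable_one_div_Gamma.continuous.comp Complex.continuous_ofReal)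

theorem tendsto_self_mul_Gamma_nhdsNE_zero :
    Tendsto (fun s : ℝ => s * Gamma s) (𝓝[≠] 0) (𝓝 1) := by
  have hcont : ContinuousAt Gamma 1 :=
    (differentiableAt_Gamma fun m => by linarith [(m.cast_nonneg : (0 : ℝ) ≤ m)]).continuousAt
  have hshift : Tendsto (fun s : ℝ => Gamma (s + 1)) (𝓝 0) (𝓝 1) := by
    have := hcont.tendsto.comp ((continuous_add_const 1).tendsto' 0 1 (zero_add 1))
    rwa [Gamma_one] at this
  refine (hshift.mono_left nhdsWithin_le_nhds).congr' ?_
  filter_upwards [self_mem_nhdsWithin] with s hs using Gamma_add_one hs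

theorem tendsto_add_nat_mul_Gamma_nhdsNE (n : ℕ) :
    Tendsto (fun s : ℝ => (s + n) * Gamma s) (𝓝[≠] (-n)) (𝓝 ((-1) ^ n / n !)) := by
  induction n with
  | zero => simpa using tendsto_self_mul_Gamma_nhdsNE_zero
  | succ n ih =>
    have hshift : Tendsto (· + 1) (𝓝[≠] (-(n + 1 : ℕ) : ℝ)) (𝓝[≠] (-n : ℝ)) :=
      Filter.map_add_right_nhdsNE.le.trans_eq (congrArg (𝓝[≠] ·) (by push_cast; ring))
    have hne : (-(n + 1 : ℕ) : ℝ) ≠ 0 := neg_ne_zero.mpr (by positivity)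
    -- `(s + (n + 1)) Γ(s) = ((s + 1) + n) Γ(s + 1) / s`
    have hquot := (ih.comp hshift).div (tendsto_id.mono_left nhdsWithin_le_nhds) hne
    convert hquot.congr' ?_ using 2
    · push_cast [Nat.factorial_succ]
      field_simp
      ring
    · filter_upwards [eventually_nhdsWithin_of_eventually_nhds (eventually_ne_nhds hne)] with s hs
      simp only [Pi.div_apply, Function.comp_apply, id_eq, Gamma_add_one hs]
      field_simp
      push_cast
      ring

end Real

open Real

noncomputable def betaMellin (α β t : ℝ) : ℝ :=
  Gamma (t + α - 1) * Gamma (α + β) / (Gamma (t + α + β - 1) * Gamma α)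

theorem betaMellin_eq_mul_inv (α β t : ℝ) :
    betaMellin α β t =
      Gamma (α + β) / Gamma α * (Gamma (t + α - 1) * (Gamma (t + α + β - 1))⁻¹) := by
  unfold betaMellin
  ring

theorem continuousAt_betaMellin {α β t : ℝ} (h : ∀ k : ℕ, t + α - 1 ≠ -k) :
    ContinuousAt (betaMellin α β) t := by
  have hnum : ContinuousAt (fun t => Gamma (t + α - 1)) t :=
    ContinuousAt.comp (g := Gamma) (differentiableAt_Gamma h).continuousAt (by fun_prop)
  have hden : Continuous fun t => (Gamma (t + α + β - 1))⁻¹ :=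
    continuous_inv_Gamma.comp (by fun_prop)
  rw [funext (betaMellin_eq_mul_inv α β)]
  exact continuousAt_const.mul (hnum.mul hden.continuousAt)

theorem tendsto_sub_mul_betaMellin_nhds_zero {α β t₀ : ℝ} (h : ∀ k : ℕ, t₀ + α - 1 ≠ -k) :
    Tendsto (fun t => (t - t₀) * betaMellin α β t) (𝓝 t₀) (𝓝 0) := by
  simpa using ((continuous_sub_right t₀).tendsto t₀).mul (continuousAt_betaMellin (β := β) h)

theorem tendsto_sub_mul_betaMellin_nhdsNE_pole (α β : ℝ) (n : ℕ) :
    Tendsto (fun t => (t - (1 - α - n)) * betaMellin α β t) (𝓝[≠] (1 - α - n))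
      (𝓝 (Gamma (α + β) / Gamma α * (1 / Gamma (β - n)) * ((-1) ^ n / n !))) := by
  have hshift : Tendsto (· + (α - 1)) (𝓝[≠] (1 - α - n)) (𝓝[≠] (-n)) :=
    Filter.map_add_right_nhdsNE.le.trans_eq (congrArg (𝓝[≠] ·) (by ring))
  have hres := (tendsto_add_nat_mul_Gamma_nhdsNE n).comp hshift
  have hden : Tendsto (fun t => (Gamma (t + α + β - 1))⁻¹) (𝓝[≠] (1 - α - n))
      (𝓝 (Gamma (β - n))⁻¹) := by
    have hcont : Continuous fun t => (Gamma (t + α + β - 1))⁻¹ :=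
      continuous_inv_Gamma.comp (by fun_prop)
    convert (hcont.tendsto (1 - α - n)).mono_left nhdsWithin_le_nhds using 4
    ring
  convert (hres.mul hden).const_mul (Gamma (α + β) / Gamma α) using 1
  · funext t
    rw [betaMellin_eq_mul_inv]
    simp only [Function.comp_apply, add_sub_assoc]
    ring
  · congr 1
    ring

theorem residue_Rn_general (π₀ a₁ b₁ a₂ b₂ : ℝ) (n : ℕ)
    (hfin : ∀ k : ℕ, (1 - a₁ - (n : ℝ)) + a₂ - 1 ≠ -(k : ℝ))
    (m : ℝ → ℝ)
    (hm : ∀ t, m t =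
      π₀ * (Real.Gamma (t + a₁ - 1) * Real.Gamma (a₁ + b₁) /
        (Real.Gamma (t + a₁ + b₁ - 1) * Real.Gamma a₁)) +
      (1 - π₀) * (Real.Gamma (t + a₂ - 1) * Real.Gamma (a₂ + b₂) /
        (Real.Gamma (t + a₂ + b₂ - 1) * Real.Gamma a₂))) :
    Filter.Tendsto (fun t => (t - (1 - a₁ - (n : ℝ))) * m t)
      (nhdsWithin (1 - a₁ - (n : ℝ)) (Set.Ioi (1 - a₁ - (n : ℝ))))
      (nhds (π₀ * Real.Gamma (a₁ + b₁) / Real.Gamma a₁ *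
        (1 / Real.Gamma (b₁ - (n : ℝ))) * ((-1 : ℝ) ^ n / n.factorial))) := by
  have hmix : (fun t => (t - (1 - a₁ - n)) * m t) = fun t =>
      π₀ * ((t - (1 - a₁ - n)) * betaMellin a₁ b₁ t) +
        (1 - π₀) * ((t - (1 - a₁ - n)) * betaMellin a₂ b₂ t) := by
    funext t
    rw [hm t, betaMellin, betaMellin]
    ring
  have hpunct := ((tendsto_sub_mul_betaMellin_nhdsNE_pole a₁ b₁ n).const_mul π₀).add
    (((tendsto_sub_mul_betaMellin_nhds_zero (β := b₂) hfin).mono_left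
      nhdsWithin_le_nhds).const_mul (1 - π₀))
  rw [hmix]
  convert hpunct.mono_left (nhdsGT_le_nhdsNE _) using 2
  ring

theorem residue_Rn (π₀ a₁ b₁ a₂ b₂ : ℝ) (n : ℕ)
    (hπ : π₀ ∈ Set.Ioo (0:ℝ) 1)
    (ha₁ : 0 < a₁) (hb₁ : 0 < b₁) (ha₂ : 0 < a₂) (hb₂ : 0 < b₂)
    (hint : ¬ ∃ m : ℤ, a₁ - a₂ = (m : ℝ))
    (hb₁ni : ¬ ∃ k : ℕ, b₁ = (k : ℝ) + 1)
    (hfin : ∀ k : ℕ, (1 - a₁ - (n : ℝ)) + a₂ - 1 ≠ -(k : ℝ))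
    (m : ℝ → ℝ)
    (hm : ∀ t, m t =
      π₀ * (Real.Gamma (t + a₁ - 1) * Real.Gamma (a₁ + b₁) /
        (Real.Gamma (t + a₁ + b₁ - 1) * Real.Gamma a₁)) +
      (1 - π₀) * (Real.Gamma (t + a₂ - 1) * Real.Gamma (a₂ + b₂) /
        (Real.Gamma (t + a₂ + b₂ - 1) * Real.Gamma a₂))) :
    Filter.Tendsto (fun t => (t - (1 - a₁ - (n : ℝ))) * m t)
      (nhdsWithin (1 - a₁ - (n : ℝ)) (Set.Ioi (1 - a₁ - (n : ℝ))))
      (nhds (π₀ * Real.Gamma (a₁ + b₁) / Real.Gamma a₁ *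
        (1 / Real.Gamma (b₁ - (n : ℝ))) * ((-1 : ℝ) ^ n / n.factorial))) :=
  residue_Rn_general π₀ a₁ b₁ a₂ b₂ n hfin m hm
end

section
/- Let π ∈ (0,1) and (a₁,b₁), (a₂,b₂) ∈ ℝ²_{>0} be distinct with a₁ − a₂ not an integer or b₁ − b₂ not an integer. If π'·f(x;a₁',b₁') + (1−π')·f(x;a₂',b₂') = π·f(x;a₁,b₁) + (1−π)·f(x;a₂,b₂) for all x ∈ (0,1), with π' ∈ (0,1) and positive parameters, then the set of components {(π, a₁, b₁), (1−π, a₂, b₂)} equals {(π', a₁', b₁'), (1−π', a₂', b₂')}. -/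
/-!
Near `0`, a term `c x^a (1-x)^b` is `x^a` times a function analytic at `0`. A sum
`∑ x^{aᵢ} gᵢ(x)` with the `aᵢ` pairwise incongruent modulo `ℤ` and the `gᵢ` analytic vanishes only
if every `gᵢ` does: the leading exponents `aᵢ + ord₀ gᵢ` are then pairwise distinct, and the
smallest one dominates. Hence in a vanishing combination of such kernels on `(0,1)` every class of
exponents modulo `ℤ` sums to zero by itself (first near `0`, then on `(0,1)` by analyticity).

If `a₁ - a₂ ∉ ℤ`, the two components of the mixture lie in different classes, so each one must
cancel against exactly one component of the other mixture; and a single kernel determines its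
weight and exponents (compare the dominant powers at `0`, and at `1` after `x ↦ 1 - x`). The case
`b₁ - b₂ ∉ ℤ` reduces to this one by the reflection `x ↦ 1 - x`.
-/

noncomputable def betaDen (α β x : ℝ) : ℝ :=
  Real.Gamma (α + β) / (Real.Gamma α * Real.Gamma β) * x ^ (α - 1) * (1 - x) ^ (β - 1)

open Set Filter Topology

variable {ι : Type*}

theorem tendsto_rpow_nhdsGT_zero_of_pos {e : ℝ} (he : 0 < e) :
    Tendsto (fun x : ℝ => x ^ e) (𝓝[>] 0) (𝓝 0) := by
  simpa [Real.zero_rpow he.ne'] using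
    ((Real.continuousAt_rpow_const 0 e (Or.inr he.le)).tendsto).mono_left nhdsWithin_le_nhds

theorem apply_zero_eq_zero_of_sum_rpow_mul_eq_zero {t : Finset ι} {e : ι → ℝ} {h : ι → ℝ → ℝ}
    {i₀ : ι} (hi₀ : i₀ ∈ t) (he : ∀ i ∈ t, i ≠ i₀ → e i₀ < e i)
    (hh : ∀ i ∈ t, ContinuousAt (h i) 0)
    (hsum : ∀ᶠ x in 𝓝[>] 0, ∑ i ∈ t, x ^ e i * h i x = 0) : h i₀ 0 = 0 := by
  classical
  set F := fun x : ℝ => h i₀ x + ∑ i ∈ t.erase i₀, x ^ (e i - e i₀) * h i x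
  have hF : Tendsto F (𝓝[>] 0) (𝓝 (h i₀ 0 + ∑ i ∈ t.erase i₀, 0 * h i 0)) := by
    refine ((hh i₀ hi₀).tendsto.mono_left nhdsWithin_le_nhds).add (tendsto_finsetSum _ ?_)
    intro i hi
    exact (tendsto_rpow_nhdsGT_zero_of_pos (sub_pos.2 (he i (Finset.mem_of_mem_erase hi)
      (Finset.ne_of_mem_erase hi)))).mul ((hh i (Finset.mem_of_mem_erase hi)).tendsto.mono_left
        nhdsWithin_le_nhds)
  have hF0 : F =ᶠ[𝓝[>] 0] fun _ => 0 := by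
    filter_upwards [hsum, self_mem_nhdsWithin] with x hx (hx0 : 0 < x)
    have hsplit : ∑ i ∈ t, x ^ e i * h i x = x ^ e i₀ * F x := by
      rw [← Finset.add_sum_erase _ _ hi₀, mul_add, Finset.mul_sum]
      congr 1
      refine Finset.sum_congr rfl fun i _ => ?_
      rw [← mul_assoc, ← Real.rpow_add hx0, add_sub_cancel]
    rw [hsplit] at hx
    exact (mul_eq_zero.1 hx).resolve_left (Real.rpow_pos_of_pos hx0 _).ne'
  simpa using tendsto_nhds_unique (hF.congr' hF0) tendsto_const_nhds

theorem eventually_eq_zero_of_sum_rpow_mul_eq_zero {s : Finset ι} {a : ι → ℝ} {g : ι → ℝ → ℝ}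
    (ha : InjOn (fun i => Int.fract (a i)) s) (hg : ∀ i ∈ s, AnalyticAt ℝ (g i) 0)
    (hsum : ∀ᶠ x in 𝓝[>] 0, ∑ i ∈ s, x ^ a i * g i x = 0) :
    ∀ i ∈ s, ∀ᶠ x in 𝓝 0, g i x = 0 := by
  classical
  by_contra! hne
  set t := s.filter fun i => ¬∀ᶠ x in 𝓝 0, g i x = 0
  have ht : t.Nonempty := by
    obtain ⟨i, hi, hi'⟩ := hne
    exact ⟨i, Finset.mem_filter.2 ⟨hi, not_eventually.2 hi'⟩⟩
  have hfactor : ∀ i ∈ t, ∃ n : ℕ, ∃ h : ℝ → ℝ, AnalyticAt ℝ h 0 ∧ h 0 ≠ 0 ∧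
      ∀ᶠ x in 𝓝 0, g i x = x ^ n * h x := fun i hi => by
    obtain ⟨his, hi⟩ := Finset.mem_filter.1 hi
    simpa using (hg i his).exists_eventuallyEq_pow_smul_nonzero_iff.2 hi
  choose! n h hh hh0 hgh using hfactor
  obtain ⟨i₀, hi₀, hmin⟩ := t.exists_min_image (fun i => a i + n i) ht
  refine hh0 i₀ hi₀ (apply_zero_eq_zero_of_sum_rpow_mul_eq_zero hi₀ (e := fun i => a i + n i)
    (fun i hi hne => (hmin i hi).lt_of_ne fun heq => hne ?_)
    (fun i hi => (hh i hi).continuousAt) ?_)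
  · refine ha (Finset.mem_filter.1 hi).1 (Finset.mem_filter.1 hi₀).1 ?_
    exact Int.fract_eq_fract.2 ⟨n i₀ - n i, by push_cast; linarith⟩
  · have hvanish : ∀ᶠ x in 𝓝 0, ∀ i ∈ s, (∀ᶠ y in 𝓝 0, g i y = 0) → g i x = 0 := by
      refine (eventually_all_finset s).2 fun i _ => ?_
      by_cases hi : ∀ᶠ y in 𝓝 0, g i y = 0
      exacts [hi.mono fun x hx _ => hx, Eventually.of_forall fun x hi' => absurd hi' hi]
    filter_upwards [hsum, nhdsWithin_le_nhds hvanish,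
      nhdsWithin_le_nhds ((eventually_all_finset t).2 hgh), self_mem_nhdsWithin]
      with x hx hvanish hgh (hx0 : 0 < x)
    calc ∑ i ∈ t, x ^ (a i + n i) * h i x = ∑ i ∈ t, x ^ a i * g i x :=
          Finset.sum_congr rfl fun i hi => by
            rw [hgh i hi, ← mul_assoc, Real.rpow_add hx0, Real.rpow_natCast]
      _ = ∑ i ∈ s, x ^ a i * g i x := Finset.sum_filter_of_ne fun i hi hne =>
          fun hi' => hne (by rw [hvanish i hi hi', mul_zero])
      _ = 0 := hx

theorem eventually_sum_filter_fract_rpow_mul_eq_zero {s : Finset ι} {a : ι → ℝ}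
    {g : ι → ℝ → ℝ} (hg : ∀ i ∈ s, AnalyticAt ℝ (g i) 0)
    (hsum : ∀ᶠ x in 𝓝[>] 0, ∑ i ∈ s, x ^ a i * g i x = 0) (θ : ℝ) :
    ∀ᶠ x in 𝓝[>] 0, ∑ i ∈ s with Int.fract (a i) = θ, x ^ a i * g i x = 0 := by
  classical
  set T := s.image fun i => Int.fract (a i)
  rcases em' (θ ∈ T) with hθ | hθ
  · refine Eventually.of_forall fun x => Finset.sum_eq_zero fun i hi => ?_
    obtain ⟨his, rfl⟩ := Finset.mem_filter.1 hi
    exact (hθ (Finset.mem_image_of_mem (fun i => Int.fract (a i)) his)).elim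
  obtain ⟨N, hN⟩ := (s.image fun i => ⌊a i⌋).bddBelow
  have hN' : ∀ i ∈ s, N ≤ ⌊a i⌋ := fun i hi => hN (Finset.mem_image_of_mem _ hi)
  -- As `N ≤ ⌊a i⌋`, every exponent in the class `φ` is `φ + N` plus a natural number, so the
  -- class sum is `x ^ (φ + N) * G φ x` with `G φ` analytic at `0`.
  set G := fun (φ : ℝ) (x : ℝ) => ∑ i ∈ s with Int.fract (a i) = φ,
    x ^ (⌊a i⌋ - N).toNat * g i x
  have hG : ∀ φ : ℝ, ∀ x > 0, x ^ (φ + N) * G φ x =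
      ∑ i ∈ s with Int.fract (a i) = φ, x ^ a i * g i x := fun φ x hx => by
    rw [Finset.mul_sum]
    refine Finset.sum_congr rfl fun i hi => ?_
    obtain ⟨his, rfl⟩ := Finset.mem_filter.1 hi
    rw [← mul_assoc, ← Real.rpow_natCast, ← Real.rpow_add hx]
    congr 2
    rw [← Int.cast_natCast, Int.toNat_of_nonneg (sub_nonneg.2 (hN' i his))]
    push_cast
    linarith [Int.fract_add_floor (a i)]
  have hfract : ∀ φ ∈ T, Int.fract (φ + N) = φ := fun φ hφ => by
    obtain ⟨i, -, rfl⟩ := Finset.mem_image.1 hφ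
    rw [Int.fract_add_intCast, Int.fract_fract]
  have hGzero := eventually_eq_zero_of_sum_rpow_mul_eq_zero (s := T) (a := fun φ => φ + N) (g := G)
    (fun φ hφ ψ hψ h => by simpa only [hfract φ hφ, hfract ψ hψ] using h)
    (fun φ _ => Finset.analyticAt_fun_sum _ fun i hi =>
      (analyticAt_id.pow _).mul (hg i (Finset.mem_filter.1 hi).1)) ?_
    θ hθ
  · filter_upwards [nhdsWithin_le_nhds hGzero, self_mem_nhdsWithin] with x hx (hx0 : 0 < x)
    rw [← hG θ x hx0, hx, mul_zero]
  · filter_upwards [hsum, self_mem_nhdsWithin] with x hx (hx0 : 0 < x)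
    rw [← hx, ← Finset.sum_fiberwise_of_maps_to (g := fun i => Int.fract (a i)) (t := T)
      fun i hi => Finset.mem_image_of_mem _ hi]
    exact Finset.sum_congr rfl fun φ _ => hG φ x hx0

noncomputable def betaKernel (a b x : ℝ) : ℝ := x ^ a * (1 - x) ^ b

theorem betaKernel_pos (a b : ℝ) {x : ℝ} (hx : x ∈ Ioo (0:ℝ) 1) : 0 < betaKernel a b x :=
  mul_pos (Real.rpow_pos_of_pos hx.1 a) (Real.rpow_pos_of_pos (sub_pos.2 hx.2) b)

theorem betaKernel_one_sub (a b x : ℝ) : betaKernel a b (1 - x) = betaKernel b a x := by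
  rw [betaKernel, betaKernel, sub_sub_cancel, mul_comm]

theorem one_sub_mem_Ioo {x : ℝ} (hx : x ∈ Ioo (0:ℝ) 1) : 1 - x ∈ Ioo (0:ℝ) 1 :=
  ⟨sub_pos.2 hx.2, sub_lt_self 1 hx.1⟩

theorem analyticAt_rpow_const_of_pos (a : ℝ) {x : ℝ} (hx : 0 < x) :
    AnalyticAt ℝ (fun y => y ^ a) x :=
  ((analyticAt_log hx).mul analyticAt_const).rexp'.congr <|
    (eventually_gt_nhds hx).mono fun _ hy => (Real.rpow_def_of_pos hy a).symm

theorem analyticAt_one_sub_rpow_zero (b : ℝ) : AnalyticAt ℝ (fun x : ℝ => (1 - x) ^ b) 0 :=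
  ((Real.one_add_rpow_hasFPowerSeriesAt_zero (a := b)).analyticAt.comp_of_eq analyticAt_id.neg
    neg_zero).congr
    (Eventually.of_forall fun x => by simp [sub_eq_add_neg])

theorem analyticAt_betaKernel (a b : ℝ) {x : ℝ} (hx : x ∈ Ioo (0:ℝ) 1) :
    AnalyticAt ℝ (betaKernel a b) x :=
  (analyticAt_rpow_const_of_pos a hx.1).mul
    ((analyticAt_rpow_const_of_pos b (sub_pos.2 hx.2)).comp (analyticAt_const.sub analyticAt_id))

theorem sum_filter_fract_mul_betaKernel_eq_zero {s : Finset ι} {c a b : ι → ℝ}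
    (h : ∀ x ∈ Ioo (0:ℝ) 1, ∑ i ∈ s, c i * betaKernel (a i) (b i) x = 0) (θ : ℝ) :
    ∀ x ∈ Ioo (0:ℝ) 1, ∑ i ∈ s with Int.fract (a i) = θ, c i * betaKernel (a i) (b i) x = 0 := by
  classical
  have hlocal : ∀ᶠ x in 𝓝[>] 0,
      ∑ i ∈ s with Int.fract (a i) = θ, c i * betaKernel (a i) (b i) x = 0 := by
    have hform : ∀ x i, c i * betaKernel (a i) (b i) x = x ^ a i * (c i * (1 - x) ^ b i) :=
      fun x i => by rw [betaKernel]; ring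
    simp only [hform] at h ⊢
    exact eventually_sum_filter_fract_rpow_mul_eq_zero
      (fun i _ => analyticAt_const.mul (analyticAt_one_sub_rpow_zero (b i)))
      (mem_of_superset (Ioo_mem_nhdsGT one_pos) h) θ
  obtain ⟨ε, hε, hεzero⟩ := mem_nhdsGT_iff_exists_Ioo_subset.1 hlocal
  have hδ : 0 < min ε 1 := lt_min hε one_pos
  have hanalytic : AnalyticOnNhd ℝ
      (fun x => ∑ i ∈ s with Int.fract (a i) = θ, c i * betaKernel (a i) (b i) x) (Ioo 0 1) :=
    fun x hx => Finset.analyticAt_fun_sum _ fun i _ =>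
      analyticAt_const.mul (analyticAt_betaKernel _ _ hx)
  refine fun x hx => hanalytic.eqOn_zero_of_preconnected_of_eventuallyEq_zero isPreconnected_Ioo
    (z₀ := min ε 1 / 2) ⟨half_pos hδ, by linarith [min_le_right ε 1]⟩ ?_ hx
  filter_upwards [Ioo_mem_nhds (half_pos hδ) (half_lt_self hδ)] with y hy
  exact hεzero ⟨hy.1, hy.2.trans_le (min_le_left ε 1)⟩

theorem mem_Ioo_one_half : (1 / 2 : ℝ) ∈ Ioo (0:ℝ) 1 := ⟨by norm_num, by norm_num⟩

theorem exponent_eq_of_mul_betaKernel_eq {a b a' b' c d : ℝ} (hc : c ≠ 0) (hd : d ≠ 0)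
    (h : ∀ x ∈ Ioo (0:ℝ) 1, c * betaKernel a b x = d * betaKernel a' b' x) : a = a' := by
  set e := ![a, a']
  set g := ![fun x : ℝ => c * (1 - x) ^ b, fun x => -d * (1 - x) ^ b']
  have hsum : ∀ᶠ x in 𝓝[>] 0, ∑ i, x ^ e i * g i x = 0 := by
    filter_upwards [Ioo_mem_nhdsGT one_pos] with x hx
    have hx := h x hx
    simp only [betaKernel] at hx
    simp only [Fin.sum_univ_two, e, g, Matrix.cons_val_zero, Matrix.cons_val_one]
    linear_combination hx
  have hg : ∀ i ∈ Finset.univ, ContinuousAt (g i) 0 := fun i _ => by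
    fin_cases i <;> exact continuousAt_const.mul (analyticAt_one_sub_rpow_zero _).continuousAt
  rcases lt_trichotomy a a' with hlt | heq | hlt
  · have := apply_zero_eq_zero_of_sum_rpow_mul_eq_zero (Finset.mem_univ 0)
      (fun i _ hi => by fin_cases i <;> simp_all [e]) hg hsum
    simp [g, hc] at this
  · exact heq
  · have := apply_zero_eq_zero_of_sum_rpow_mul_eq_zero (Finset.mem_univ 1)
      (fun i _ hi => by fin_cases i <;> simp_all [e]) hg hsum
    simp [g, hd] at this

theorem eq_of_mul_betaKernel_eq {a b a' b' c d : ℝ} (hc : c ≠ 0)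
    (h : ∀ x ∈ Ioo (0:ℝ) 1, c * betaKernel a b x = d * betaKernel a' b' x) :
    a = a' ∧ b = b' ∧ c = d := by
  have hd : d ≠ 0 := by
    rintro rfl
    have := h _ mem_Ioo_one_half
    rw [zero_mul, mul_eq_zero] at this
    exact this.elim hc (betaKernel_pos a b mem_Ioo_one_half).ne'
  obtain rfl := exponent_eq_of_mul_betaKernel_eq hc hd h
  obtain rfl := exponent_eq_of_mul_betaKernel_eq hc hd fun x hx => by
    simpa only [betaKernel_one_sub] using h (1 - x) (one_sub_mem_Ioo hx)
  exact ⟨rfl, rfl, mul_right_cancel₀ (betaKernel_pos a b mem_Ioo_one_half).ne'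
    (h _ mem_Ioo_one_half)⟩

theorem pair_eq_of_add_mul_betaKernel_eq_of_fract_ne {a₁ b₁ a₂ b₂ a₃ b₃ a₄ b₄ c₁ c₂ c₃ c₄ : ℝ}
    (hc₁ : c₁ ≠ 0) (hc₂ : c₂ ≠ 0) (hc₃ : c₃ ≠ 0) (hc₄ : c₄ ≠ 0)
    (ha : Int.fract a₃ ≠ Int.fract a₄)
    (h : ∀ x ∈ Ioo (0:ℝ) 1, c₁ * betaKernel a₁ b₁ x + c₂ * betaKernel a₂ b₂ x =
      c₃ * betaKernel a₃ b₃ x + c₄ * betaKernel a₄ b₄ x) :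
    ({(c₁, a₁, b₁), (c₂, a₂, b₂)} : Set (ℝ × ℝ × ℝ)) = {(c₃, a₃, b₃), (c₄, a₄, b₄)} := by
  have hsum : ∀ x ∈ Ioo (0:ℝ) 1, ∑ i, ![c₁, c₂, -c₃, -c₄] i *
      betaKernel (![a₁, a₂, a₃, a₄] i) (![b₁, b₂, b₃, b₄] i) x = 0 := fun x hx => by
    simp only [Fin.sum_univ_four, Fin.isValue, Matrix.cons_val_zero, Matrix.cons_val_one,
      Matrix.cons_val]
    linear_combination h x hx
  have h₃ := sum_filter_fract_mul_betaKernel_eq_zero hsum (Int.fract a₃)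
  have h₄ := sum_filter_fract_mul_betaKernel_eq_zero hsum (Int.fract a₄)
  simp only [Finset.sum_filter, Fin.sum_univ_four, Fin.isValue, Matrix.cons_val_zero,
    Matrix.cons_val_one, Matrix.cons_val, ha, ha.symm, if_false, add_zero] at h₃ h₄
  have hc_zero : ∀ {c a b : ℝ}, c ≠ 0 → ¬∀ x ∈ Ioo (0:ℝ) 1, -c * betaKernel a b x = 0 :=
    fun hc hzero => hc (eq_of_mul_betaKernel_eq hc (d := 0) (a' := 0) (b' := 0)
      fun x hx => by linear_combination -hzero x hx).2.2
  -- The classes of `a₃` and `a₄` are distinct, and each needs one of the kernels `1`, `2` to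
  -- cancel its own.
  by_cases h₁ : Int.fract a₁ = Int.fract a₃ <;> by_cases h₂ : Int.fract a₂ = Int.fract a₃
  · simp only [h₁, h₂, ha, if_false, zero_add] at h₄
    exact (hc_zero hc₄ h₄).elim
  · simp only [h₁, h₂, if_true, if_false, add_zero] at h₃
    have h13 : ∀ x ∈ Ioo (0:ℝ) 1, c₁ * betaKernel a₁ b₁ x = c₃ * betaKernel a₃ b₃ x :=
      fun x hx => by linear_combination h₃ x hx
    obtain ⟨rfl, rfl, rfl⟩ := eq_of_mul_betaKernel_eq hc₁ h13
    have h24 : ∀ x ∈ Ioo (0:ℝ) 1, c₂ * betaKernel a₂ b₂ x = c₄ * betaKernel a₄ b₄ x :=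
      fun x hx => by linear_combination h x hx
    obtain ⟨rfl, rfl, rfl⟩ := eq_of_mul_betaKernel_eq hc₂ h24
    rfl
  · simp only [h₁, h₂, if_true, if_false, zero_add] at h₃
    have h23 : ∀ x ∈ Ioo (0:ℝ) 1, c₂ * betaKernel a₂ b₂ x = c₃ * betaKernel a₃ b₃ x :=
      fun x hx => by linear_combination h₃ x hx
    obtain ⟨rfl, rfl, rfl⟩ := eq_of_mul_betaKernel_eq hc₂ h23
    have h14 : ∀ x ∈ Ioo (0:ℝ) 1, c₁ * betaKernel a₁ b₁ x = c₄ * betaKernel a₄ b₄ x :=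
      fun x hx => by linear_combination h x hx
    obtain ⟨rfl, rfl, rfl⟩ := eq_of_mul_betaKernel_eq hc₁ h14
    exact Set.pair_comm _ _
  · simp only [h₁, h₂, if_false, zero_add] at h₃
    exact (hc_zero hc₃ h₃).elim

theorem pair_eq_of_add_mul_betaKernel_eq {a₁ b₁ a₂ b₂ a₃ b₃ a₄ b₄ c₁ c₂ c₃ c₄ : ℝ}
    (hc₁ : c₁ ≠ 0) (hc₂ : c₂ ≠ 0) (hc₃ : c₃ ≠ 0) (hc₄ : c₄ ≠ 0)
    (hab : (¬∃ n : ℤ, a₃ - a₄ = n) ∨ ¬∃ n : ℤ, b₃ - b₄ = n)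
    (h : ∀ x ∈ Ioo (0:ℝ) 1, c₁ * betaKernel a₁ b₁ x + c₂ * betaKernel a₂ b₂ x =
      c₃ * betaKernel a₃ b₃ x + c₄ * betaKernel a₄ b₄ x) :
    ({(c₁, a₁, b₁), (c₂, a₂, b₂)} : Set (ℝ × ℝ × ℝ)) = {(c₃, a₃, b₃), (c₄, a₄, b₄)} := by
  rcases hab with ha | hb
  · exact pair_eq_of_add_mul_betaKernel_eq_of_fract_ne hc₁ hc₂ hc₃ hc₄
      (mt Int.fract_eq_fract.1 ha) h
  · have hswap := pair_eq_of_add_mul_betaKernel_eq_of_fract_ne hc₁ hc₂ hc₃ hc₄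
      (mt Int.fract_eq_fract.1 hb) fun x hx => by
        simpa only [betaKernel_one_sub] using h (1 - x) (one_sub_mem_Ioo hx)
    simpa [Set.image_pair] using
      congrArg (Set.image fun p : ℝ × ℝ × ℝ => (p.1, p.2.2, p.2.1)) hswap

noncomputable def betaNormalizer (α β : ℝ) : ℝ :=
  Real.Gamma (α + β) / (Real.Gamma α * Real.Gamma β)

theorem betaNormalizer_pos {α β : ℝ} (hα : 0 < α) (hβ : 0 < β) : 0 < betaNormalizer α β :=
  div_pos (Real.Gamma_pos_of_pos (add_pos hα hβ))
    (mul_pos (Real.Gamma_pos_of_pos hα) (Real.Gamma_pos_of_pos hβ))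

theorem betaDen_eq_mul_betaKernel (α β x : ℝ) :
    betaDen α β x = betaNormalizer α β * betaKernel (α - 1) (β - 1) x := by
  rw [betaDen, betaNormalizer, betaKernel, mul_assoc]

theorem beta_mixture_identifiable_general (π₀ a₁ b₁ a₂ b₂ π' a₁' b₁' a₂' b₂' : ℝ)
    (hπ : π₀ ∈ Set.Ioo (0:ℝ) 1) (hπ' : π' ∈ Set.Ioo (0:ℝ) 1)
    (ha₁ : 0 < a₁) (hb₁ : 0 < b₁) (ha₂ : 0 < a₂) (hb₂ : 0 < b₂)
    (ha₁' : 0 < a₁') (hb₁' : 0 < b₁') (ha₂' : 0 < a₂') (hb₂' : 0 < b₂')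
    (hnonint : (¬ ∃ m : ℤ, a₁ - a₂ = (m : ℝ)) ∨ (¬ ∃ n : ℤ, b₁ - b₂ = (n : ℝ)))
    (heq : ∀ x ∈ Set.Ioo (0:ℝ) 1,
      π' * betaDen a₁' b₁' x + (1 - π') * betaDen a₂' b₂' x =
      π₀ * betaDen a₁ b₁ x + (1 - π₀) * betaDen a₂ b₂ x) :
    ({(π₀, a₁, b₁), (1 - π₀, a₂, b₂)} : Set (ℝ × ℝ × ℝ)) =
      {(π', a₁', b₁'), (1 - π', a₂', b₂')} := by
  have hweight : ∀ {p α β : ℝ}, p ≠ 0 → 0 < α → 0 < β → p * betaNormalizer α β ≠ 0 :=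
    fun hp hα hβ => mul_ne_zero hp (betaNormalizer_pos hα hβ).ne'
  have hkernel := pair_eq_of_add_mul_betaKernel_eq (a₃ := a₁ - 1) (b₃ := b₁ - 1)
    (a₄ := a₂ - 1) (b₄ := b₂ - 1) (hweight hπ'.1.ne' ha₁' hb₁')
    (hweight (sub_pos.2 hπ'.2).ne' ha₂' hb₂') (hweight hπ.1.ne' ha₁ hb₁)
    (hweight (sub_pos.2 hπ.2).ne' ha₂ hb₂) (by simpa only [sub_sub_sub_cancel_right] using hnonint)
    fun x hx => by simpa only [betaDen_eq_mul_betaKernel, mul_assoc] using heq x hx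
  set component := fun q : ℝ × ℝ × ℝ =>
    (q.1 / betaNormalizer (q.2.1 + 1) (q.2.2 + 1), q.2.1 + 1, q.2.2 + 1)
  have hcomponent : ∀ {p α β : ℝ}, 0 < α → 0 < β →
      component (p * betaNormalizer α β, α - 1, β - 1) = (p, α, β) := fun hα hβ => by
    simp [component, (betaNormalizer_pos hα hβ).ne']
  rw [← hcomponent ha₁ hb₁, ← hcomponent ha₂ hb₂, ← hcomponent ha₁' hb₁',
    ← hcomponent ha₂' hb₂', ← Set.image_pair, ← Set.image_pair, hkernel]

theorem beta_mixture_identifiable (π₀ a₁ b₁ a₂ b₂ π' a₁' b₁' a₂' b₂' : ℝ)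
    (hπ : π₀ ∈ Set.Ioo (0:ℝ) 1) (hπ' : π' ∈ Set.Ioo (0:ℝ) 1)
    (ha₁ : 0 < a₁) (hb₁ : 0 < b₁) (ha₂ : 0 < a₂) (hb₂ : 0 < b₂)
    (ha₁' : 0 < a₁') (hb₁' : 0 < b₁') (ha₂' : 0 < a₂') (hb₂' : 0 < b₂')
    (hdist : (a₁, b₁) ≠ (a₂, b₂))
    (hnonint : (¬ ∃ m : ℤ, a₁ - a₂ = (m : ℝ)) ∨ (¬ ∃ n : ℤ, b₁ - b₂ = (n : ℝ)))
    (heq : ∀ x ∈ Set.Ioo (0:ℝ) 1,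
      π' * betaDen a₁' b₁' x + (1 - π') * betaDen a₂' b₂' x =
      π₀ * betaDen a₁ b₁ x + (1 - π₀) * betaDen a₂ b₂ x) :
    ({(π₀, a₁, b₁), (1 - π₀, a₂, b₂)} : Set (ℝ × ℝ × ℝ)) =
      {(π', a₁', b₁'), (1 - π', a₂', b₂')} :=
  beta_mixture_identifiable_general π₀ a₁ b₁ a₂ b₂ π' a₁' b₁' a₂' b₂' hπ hπ' ha₁ hb₁ ha₂ hb₂ ha₁'
    hb₁' ha₂' hb₂' hnonint heq
end
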